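/- arXiv:1304.4696 — 2 statements merged into one kernel-verified Lean document; each statement's English description precedes it below -/
import Mathlib

section
/- Let n ≥ 1, let A = (a_1,…,a_n) and B = (b_1,…,b_n) be sequences of nonnegative real numbers with B ⪯ A, and let C = (c_1,…,c_n) be a nonincreasing sequence of positive integers. Then for every permutation σ of {1,…,n}, the expanded sequence B*(c_{σ(1)},…,c_{σ(n)}) satisfies B*(c_{σ(1)},…,c_{σ(n)}) ⪯ A*C (both expanded sequences have length c_1+…+c_n). -/
/-- `MajBy B A` means that `B ⪯ A`: for every rearrangement `B'` of `B` and every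
`1 ≤ k ≤ n` (where `n` is the common length), the sum of the first `k` entries of `B'`
is at most the sum of the first `k` entries of `A`. -/
def MajBy (B A : List ℝ) : Prop :=
  ∀ B' : List ℝ, B'.Perm B → ∀ k : ℕ, 1 ≤ k → k ≤ A.length →
    (B'.take k).sum ≤ (A.take k).sum

/-- `expandSeq A C = A * C`: each entry `aₗ` of `A` is repeated `cₗ` times, in order. -/
def expandSeq (A : List ℝ) (C : List ℕ) : List ℝ :=
  (List.zipWith (fun x c => List.replicate c x) A C).flatten

open Finset

/-- Abel summation comparison. -/
lemma abel_le (n : ℕ) (w v β : ℕ → ℝ)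
    (hβa : ∀ i, i + 1 < n → β (i + 1) ≤ β i)
    (hβ0 : ∀ i, i < n → 0 ≤ β i)
    (hwv : ∀ m, m ≤ n → ∑ i ∈ range m, w i ≤ ∑ i ∈ range m, v i) :
    ∑ i ∈ range n, β i * w i ≤ ∑ i ∈ range n, β i * v i := by
  rcases Nat.eq_zero_or_pos n with rfl | hn
  · simp
  have hb := Finset.sum_range_by_parts β w n
  have hb' := Finset.sum_range_by_parts β v n
  simp only [smul_eq_mul] at hb hb'
  rw [hb, hb']
  apply sub_le_sub
  · apply mul_le_mul_of_nonneg_left (hwv n le_rfl)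
    exact hβ0 (n-1) (by omega)
  · apply Finset.sum_le_sum
    intro i hi
    simp only [Finset.mem_range] at hi
    apply mul_le_mul_of_nonpos_left (hwv (i+1) (by omega))
    have := hβa i (by omega)
    linarith


lemma sum_getD {M : Type*} [AddCommMonoid M] (l : List M) (d : M) :
    l.sum = ∑ i ∈ range l.length, l.getD i d := by
  induction l with
  | nil => simp
  | cons x l ih =>
    rw [List.sum_cons, List.length_cons, Finset.sum_range_succ']
    simp [ih, add_comm]

lemma take_sum_getD {M : Type*} [AddCommMonoid M] (l : List M) (d : M) (m : ℕ)
    (hm : m ≤ l.length) :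
    (l.take m).sum = ∑ i ∈ range m, l.getD i d := by
  rw [sum_getD (l.take m) d, List.length_take, min_eq_left hm]
  apply Finset.sum_congr rfl
  intro i hi
  simp only [Finset.mem_range] at hi
  rw [List.getD_eq_getElem _ _ (by simp [List.length_take]; omega),
      List.getD_eq_getElem _ _ (by omega), List.getElem_take]

lemma expand_length (a : List ℝ) (c : List ℕ) (h : a.length = c.length) :
    (expandSeq a c).length = c.sum := by
  induction a generalizing c with
  | nil => cases c with
    | nil => simp [expandSeq]
    | cons m c => simp at h
  | cons x a ih =>
    cases c with
    | nil => simp at h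
    | cons m c =>
      simp only [expandSeq, List.zipWith_cons_cons, List.flatten_cons, List.length_append,
        List.length_replicate, List.sum_cons]
      simp only [List.length_cons] at h
      rw [← ih c (by omega)]; rfl

lemma expand_take (a : List ℝ) (c : List ℕ) (h : a.length = c.length) (k : ℕ) :
    ((expandSeq a c).take k).sum
      = ∑ i ∈ range c.length, (min (c.getD i 0) (k - (c.take i).sum)) • a.getD i 0 := by
  induction a generalizing c k with
  | nil => cases c with
    | nil => simp [expandSeq]
    | cons m c => simp at h
  | cons x a ih =>
    cases c with
    | nil => simp at h
    | cons m c =>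
      simp only [List.length_cons] at h
      have hlen : (List.replicate m x).length = m := List.length_replicate
      have hexp : expandSeq (x :: a) (m :: c) = List.replicate m x ++ expandSeq a c := by
        simp [expandSeq]
      rw [hexp, List.take_append, List.sum_append, hlen, List.take_replicate,
        List.sum_replicate, ih c (by omega) (k - m), List.length_cons, Finset.sum_range_succ',
        add_comm]
      congr 1
      · apply Finset.sum_congr rfl
        intro i hi
        simp only [List.getD_cons_succ, List.take_succ_cons, List.sum_cons, ← Nat.sub_sub]
      · simp [min_comm]


/-- split a sub-multiset of a sum -/
lemma multiset_split {α : Type*} [DecidableEq α] (s t u : Multiset α) (h : s ≤ t + u) :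
    ∃ s₁ s₂, s₁ ≤ t ∧ s₂ ≤ u ∧ s = s₁ + s₂ := by
  refine ⟨s ∩ t, s - t, Multiset.inter_le_right .., ?_, ?_⟩
  · rw [Multiset.le_iff_count]
    intro a
    have := Multiset.le_iff_count.mp h a
    simp only [Multiset.count_sub, Multiset.count_add] at *
    omega
  · rw [Multiset.ext]
    intro a
    have := Multiset.le_iff_count.mp h a
    simp only [Multiset.count_add, Multiset.count_inter, Multiset.count_sub] at *
    omega

lemma exists_weights (b : List ℝ) (c : List ℕ) (h : b.length = c.length)
    (s : Multiset ℝ) (hs : s ≤ (expandSeq b c : Multiset ℝ)) :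
    ∃ w : List ℕ, w.length = b.length ∧ List.Forall₂ (· ≤ ·) w c ∧
      w.sum = Multiset.card s ∧
      s.sum = (List.zipWith (fun (k : ℕ) (x : ℝ) => k • x) w b).sum := by
  induction b generalizing c s with
  | nil =>
    cases c with
    | nil =>
      have : s = 0 := by simpa [expandSeq] using hs
      exact ⟨[], by simp, List.Forall₂.nil, by simp [this], by simp [this]⟩
    | cons m c => simp at h
  | cons x b ih =>
    cases c with
    | nil => simp at h
    | cons m c =>
      simp only [List.length_cons] at h
      have hexp : expandSeq (x :: b) (m :: c) = List.replicate m x ++ expandSeq b c := by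
        simp [expandSeq]
      rw [hexp] at hs
      have hs' : s ≤ (Multiset.replicate m x) + (expandSeq b c : Multiset ℝ) := by
        simpa [← Multiset.coe_add, Multiset.coe_replicate] using hs
      obtain ⟨s₁, s₂, hs₁, hs₂, rfl⟩ := multiset_split s _ _ hs'
      obtain ⟨w, hwl, hwf, hws, hsum⟩ := ih c (by omega) s₂ hs₂
      have hrep : s₁ = Multiset.replicate (Multiset.card s₁) x :=
    Multiset.eq_replicate_card.mpr (fun b hb => Multiset.eq_of_mem_replicate (Multiset.mem_of_le hs₁ hb))
      refine ⟨Multiset.card s₁ :: w, by simp [hwl], List.Forall₂.cons ?_ hwf, ?_, ?_⟩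
      · have := Multiset.card_le_card hs₁
        simpa using this
      · simp [hws]
      · rw [Multiset.sum_add, List.zipWith_cons_cons, List.sum_cons, ← hsum]
        congr 1
        rw [hrep]
        simp
lemma all_le_take_sum (x : ℕ) (l : List ℕ) (hx : ∀ y ∈ l, y ≤ x) (m : ℕ) :
    (l.take (m+1)).sum ≤ x + (l.take m).sum := by
  induction l generalizing m with
  | nil => simp
  | cons y l ih =>
    cases m with
    | zero => simpa using hx y (by simp)
    | succ m =>
      simp only [List.take_succ_cons, List.sum_cons]
      have := ih (fun z hz => hx z (by simp [hz])) m
      omega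

lemma sum_le_take (l : List ℕ) (hl : l.Pairwise (· ≥ ·)) (t : Multiset ℕ) (ht : t ≤ ↑l) :
    t.sum ≤ (l.take (Multiset.card t)).sum := by
  induction l generalizing t with
  | nil =>
    have : t = 0 := le_bot_iff.mp ht
    simp [this]
  | cons x l ih =>
    rw [List.pairwise_cons] at hl
    have ht' : t ≤ ({x} : Multiset ℕ) + ↑l := by
      simpa [← Multiset.singleton_add, ← Multiset.cons_coe] using ht
    obtain ⟨t₁, t₂, ht₁, ht₂, rfl⟩ := multiset_split t _ _ ht'
    have hc1 : Multiset.card t₁ ≤ 1 := by simpa using Multiset.card_le_card ht₁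
    interval_cases hc : (Multiset.card t₁)
    · have h0 : t₁ = 0 := Multiset.card_eq_zero.mp hc
      subst h0
      simp only [zero_add, Multiset.sum_zero] at *
      calc t₂.sum ≤ (l.take (Multiset.card t₂)).sum := ih hl.2 t₂ ht₂
        _ ≤ ((x :: l).take (Multiset.card t₂)).sum := by
            cases hm : (Multiset.card t₂) with
            | zero => simp
            | succ m =>
              simp only [List.take_succ_cons, List.sum_cons]
              have := all_le_take_sum x l (fun y hy => hl.1 y hy) m
              omega
    · have h1 : t₁ = {x} := by
        have := Multiset.card_eq_one.mp hc
        obtain ⟨a, rfl⟩ := this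
        have : a ∈ ({x} : Multiset ℕ) := Multiset.mem_of_le ht₁ (by simp)
        simp_all
      subst h1
      simp only [Multiset.card_add, Multiset.card_singleton]
      rw [show (1 + Multiset.card t₂) = Multiset.card t₂ + 1 by omega, List.take_succ_cons,
        List.sum_cons, Multiset.sum_add, Multiset.sum_singleton]
      exact Nat.add_le_add_left (ih hl.2 t₂ ht₂) x


lemma vsum (c : List ℕ) (k : ℕ) (m : ℕ) (hm : m ≤ c.length) :
    ∑ i ∈ range m, min (c.getD i 0) (k - (c.take i).sum) = min k ((c.take m).sum) := by
  induction m with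
  | zero => simp
  | succ m ih =>
    rw [Finset.sum_range_succ, ih (by omega), List.sum_take_succ c m (by omega),
      List.getD_eq_getElem _ _ (by omega)]
    omega

lemma map_getD {α β' : Type*} (l : List α) (f : α → β') (d : α) (i : ℕ) (hi : i < l.length) :
    (l.map f).getD i (f d) = f (l.getD i d) := by
  rw [List.getD_eq_getElem _ _ (by simpa), List.getD_eq_getElem _ _ hi, List.getElem_map]

lemma zip_le (b : List ℝ) (w c : List ℕ) (hf : List.Forall₂ (· ≤ ·) w c) :
    ∀ p ∈ (b.zip w).zip c, p.1.2 ≤ p.2 := by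
  induction hf generalizing b with
  | nil => simp
  | @cons x y w' c' hxy hf ih =>
    cases b with
    | nil => simp
    | cons z b =>
      intro p hp
      simp only [List.zip_cons_cons, List.mem_cons] at hp
      rcases hp with rfl | hp
      · exact hxy
      · exact ih b p hp

lemma zip3_sum (b : List ℝ) (w c : List ℕ) (h1 : b.length = w.length) (h2 : b.length = c.length) :
    (((b.zip w).zip c).map fun p => ((p.1.2 : ℕ) • p.1.1 : ℝ)).sum
      = (List.zipWith (fun (k : ℕ) (x : ℝ) => k • x) w b).sum := by
  induction b generalizing w c with
  | nil => simp
  | cons x b ih =>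
    cases w with
    | nil => simp at h1
    | cons m w =>
      cases c with
      | nil => simp at h2
      | cons d c =>
        simp only [List.length_cons] at h1 h2
        simp only [List.zip_cons_cons, List.zipWith_cons_cons, List.map_cons, List.sum_cons]
        rw [ih w c (by omega) (by omega)]


theorem stmt2 (n : ℕ) (hn : 1 ≤ n) (A B : List ℝ) (C : List ℕ)
    (hA : A.length = n) (hB : B.length = n) (hC : C.length = n)
    (hAn : ∀ x ∈ A, (0:ℝ) ≤ x) (hBn : ∀ x ∈ B, (0:ℝ) ≤ x)
    (hCpos : ∀ c ∈ C, 0 < c) (hCdec : C.Chain' (· ≥ ·))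
    (hmaj : MajBy B A) :
    ∀ C' : List ℕ, C'.Perm C → MajBy (expandSeq B C') (expandSeq A C) := by
  intro C' hC' B'' hB'' k hk1 hkN
  have hC'len : C'.length = n := hC'.length_eq.trans hC
  have hCsum : C'.sum = C.sum := hC'.sum_eq
  have hNA : (expandSeq A C).length = C.sum := expand_length A C (by omega)
  have hNB : (expandSeq B C').length = C'.sum := expand_length B C' (by omega)
  have hkC : k ≤ C.sum := by rwa [hNA] at hkN
  have hB''len : B''.length = C.sum := by rw [hB''.length_eq, hNB, hCsum]
  have hCsorted : C.Pairwise (· ≥ ·) := List.isChain_iff_pairwise.mp hCdec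
  -- RHS
  rw [expand_take A C (by omega) k]
  -- LHS as weighted sum
  set s : Multiset ℝ := ↑(B''.take k) with hs_def
  have hsle : s ≤ (expandSeq B C' : Multiset ℝ) :=
    Multiset.coe_le.mpr ((List.take_sublist k B'').subperm.trans hB''.subperm)
  have hscard : Multiset.card s = k := by
    rw [hs_def, Multiset.coe_card, List.length_take]
    omega
  obtain ⟨w, hwl, hwf, hws, hsum⟩ := exists_weights B C' (by omega) s hsle
  have hwn : w.length = n := by omega
  -- sorted triples
  set T : List ((ℝ × ℕ) × ℕ) := (B.zip w).zip C' with hT_def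
  have hTlen : T.length = n := by
    simp [hT_def, List.length_zip]
    omega
  set r : ((ℝ × ℕ) × ℕ) → ((ℝ × ℕ) × ℕ) → Prop := fun p q => q.1.1 ≤ p.1.1 with hr_def
  haveI : DecidableRel r := fun p q => Real.decidableLE _ _
  haveI : IsTotal _ r := ⟨fun p q => le_total q.1.1 p.1.1⟩
  haveI : IsTrans _ r := ⟨fun p q u h1 h2 => le_trans h2 h1⟩
  set Tτ : List ((ℝ × ℕ) × ℕ) := List.insertionSort r T with hTt_def
  have hperm : Tτ.Perm T := List.perm_insertionSort r T
  have hsort : Tτ.Pairwise r := List.pairwise_insertionSort r T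
  have hTtlen : Tτ.length = n := hperm.length_eq.trans hTlen
  -- projections
  have hT3 : T.map Prod.snd = C' := List.map_snd_zip (by simp [List.length_zip]; omega)
  have hTfst : T.map Prod.fst = B.zip w := List.map_fst_zip (by simp [List.length_zip]; omega)
  have hT1 : T.map (fun p => p.1.1) = B := by
    have : T.map (fun p => p.1.1) = (T.map Prod.fst).map Prod.fst := by
      rw [List.map_map]; rfl
    rw [this, hTfst]
    exact List.map_fst_zip (by omega)
  have hT2 : T.map (fun p => p.1.2) = w := by
    have : T.map (fun p => p.1.2) = (T.map Prod.fst).map Prod.snd := by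
      rw [List.map_map]; rfl
    rw [this, hTfst]
    exact List.map_snd_zip (by omega)
  -- index functions
  set d : (ℝ × ℕ) × ℕ := ((0, 0), 0) with hd_def
  set β : ℕ → ℝ := fun i => (Tτ.getD i d).1.1 with hβ_def
  set κ : ℕ → ℕ := fun i => (Tτ.getD i d).2 with hκ_def
  set ω : ℕ → ℕ := fun i => (Tτ.getD i d).1.2 with hω_def
  set v : ℕ → ℕ := fun i => min (C.getD i 0) (k - (C.take i).sum) with hv_def
  -- LHS = ∑ ω β
  have hL : (B''.take k).sum = ∑ i ∈ range n, β i * (ω i : ℝ) := by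
    have e1 : (B''.take k).sum = s.sum := (Multiset.sum_coe _).symm
    have e2 : s.sum = (T.map fun p => ((p.1.2 : ℕ) • p.1.1 : ℝ)).sum := by
      rw [hsum, ← zip3_sum B w C' (by omega) (by omega)]
    have e3 : (T.map fun p => ((p.1.2 : ℕ) • p.1.1 : ℝ)).sum
        = (Tτ.map fun p => ((p.1.2 : ℕ) • p.1.1 : ℝ)).sum := ((hperm.map _).sum_eq).symm
    rw [e1, e2, e3, sum_getD _ (((d.1.2 : ℕ) • d.1.1 : ℝ)), List.length_map, hTtlen]
    apply Finset.sum_congr rfl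
    intro i hi
    simp only [Finset.mem_range] at hi
    rw [map_getD Tτ _ d i (by omega)]
    simp [hβ_def, hω_def, mul_comm]
  rw [hL]
  -- prefix sums of sorted weights
  have hωsum : ∀ m, m ≤ n → ∑ i ∈ range m, ω i ≤ min k ((C.take m).sum) := by
    intro m hm
    have hωκ : ∑ i ∈ range m, ω i ≤ ∑ i ∈ range m, κ i := by
      apply Finset.sum_le_sum
      intro i hi
      simp only [Finset.mem_range] at hi
      have hmem : Tτ.getD i d ∈ T := hperm.mem_iff.mp (by
        rw [List.getD_eq_getElem _ _ (by omega)]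
        exact List.getElem_mem _)
      exact zip_le B w C' hwf _ hmem
    have hκC : ∑ i ∈ range m, κ i ≤ (C.take m).sum := by
      have e : ∑ i ∈ range m, κ i = ((Tτ.map Prod.snd).take m).sum := by
        rw [take_sum_getD (Tτ.map Prod.snd) d.2 m (by simp [hTtlen]; omega)]
        apply Finset.sum_congr rfl
        intro i hi
        simp only [Finset.mem_range] at hi
        rw [map_getD Tτ _ d i (by omega)]
      rw [e]
      have hsub : (↑(((Tτ.map Prod.snd).take m)) : Multiset ℕ) ≤ ↑C := by
        apply Multiset.coe_le.mpr
        apply List.Subperm.trans ((List.take_sublist m _).subperm)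
        exact ((hperm.map Prod.snd).trans (by rw [hT3]; exact hC')).subperm
      have := sum_le_take C hCsorted _ hsub
      rwa [Multiset.coe_card, List.length_take, List.length_map, hTtlen,
        min_eq_left (by omega)] at this
    have hωk : ∑ i ∈ range m, ω i ≤ k := by
      have e : ∑ i ∈ range n, ω i = k := by
        have ew : ∑ i ∈ range n, ω i = (Tτ.map (fun p => p.1.2)).sum := by
          rw [sum_getD (Tτ.map (fun p => p.1.2)) d.1.2, List.length_map, hTtlen]
          apply Finset.sum_congr rfl
          intro i hi
          simp only [Finset.mem_range] at hi
          rw [map_getD Tτ _ d i (by omega)]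
        rw [ew, (hperm.map _).sum_eq, hT2, hws, hscard]
      calc ∑ i ∈ range m, ω i ≤ ∑ i ∈ range n, ω i := by
            apply Finset.sum_le_sum_of_subset
            exact Finset.range_subset_range.mpr hm
        _ = k := e
    omega
  -- β is antitone and nonneg
  have hβa : ∀ i, i + 1 < n → β (i + 1) ≤ β i := by
    intro i hi
    have := hsort.rel_get_of_lt (a := ⟨i, by omega⟩) (b := ⟨i + 1, by omega⟩)
      (by simp [Fin.lt_def])
    simp only [hr_def, List.get_eq_getElem] at this
    rw [hβ_def]
    simp only
    rw [List.getD_eq_getElem _ _ (by omega), List.getD_eq_getElem _ _ (by omega)]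
    exact this
  have hβ0 : ∀ i, i < n → 0 ≤ β i := by
    intro i hi
    apply hBn
    have hmem : Tτ.getD i d ∈ T := hperm.mem_iff.mp (by
      rw [List.getD_eq_getElem _ _ (by omega)]
      exact List.getElem_mem _)
    rw [← hT1]
    exact List.mem_map_of_mem hmem
  -- step 1 : ∑ β ω ≤ ∑ β v
  have step1 : ∑ i ∈ range n, β i * (ω i : ℝ) ≤ ∑ i ∈ range n, β i * (v i : ℝ) := by
    apply abel_le n _ _ _ hβa hβ0
    intro m hm
    rw [← Nat.cast_sum, ← Nat.cast_sum, Nat.cast_le]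
    rw [hv_def]
    simp only
    rw [vsum C k m (by omega)]
    exact hωsum m hm
  -- step 2 : ∑ β v ≤ ∑ a v
  have hva : ∀ i, i + 1 < n → (v (i+1) : ℝ) ≤ v i := by
    intro i hi
    rw [Nat.cast_le, hv_def]
    simp only
    have hcc : C.getD (i+1) 0 ≤ C.getD i 0 := by
      rw [List.getD_eq_getElem _ _ (by omega), List.getD_eq_getElem _ _ (by omega)]
      exact List.pairwise_iff_get.mp hCsorted ⟨i, by omega⟩ ⟨i+1, by omega⟩ (by simp [Fin.lt_def])
    have hPP : (C.take i).sum ≤ (C.take (i+1)).sum := by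
      rw [List.sum_take_succ C i (by omega)]
      omega
    omega
  have hv0 : ∀ i, i < n → (0:ℝ) ≤ (v i : ℝ) := fun i _ => Nat.cast_nonneg _
  have hβA : ∀ m, m ≤ n → ∑ i ∈ range m, β i ≤ ∑ i ∈ range m, A.getD i 0 := by
    intro m hm
    rcases Nat.eq_zero_or_pos m with rfl | hm1
    · simp
    have hpermB : (Tτ.map (fun p => p.1.1)).Perm B := (hperm.map _).trans (by rw [hT1])
    have := hmaj (Tτ.map (fun p => p.1.1)) hpermB m hm1 (by omega)
    rw [take_sum_getD (Tτ.map (fun p => p.1.1)) d.1.1 m (by simp [hTtlen]; omega),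
      take_sum_getD A 0 m (by omega)] at this
    calc ∑ i ∈ range m, β i = ∑ i ∈ range m, (Tτ.map (fun p => p.1.1)).getD i d.1.1 := by
          apply Finset.sum_congr rfl
          intro i hi
          simp only [Finset.mem_range] at hi
          rw [map_getD Tτ _ d i (by omega)]
      _ ≤ ∑ i ∈ range m, A.getD i 0 := this
  have step2 : ∑ i ∈ range n, β i * (v i : ℝ) ≤ ∑ i ∈ range n, A.getD i 0 * (v i : ℝ) := by
    have := abel_le n β (fun i => A.getD i 0) (fun i => (v i : ℝ)) hva hv0 hβA
    simpa [mul_comm] using this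
  -- finish
  calc ∑ i ∈ range n, β i * (ω i : ℝ) ≤ ∑ i ∈ range n, β i * (v i : ℝ) := step1
    _ ≤ ∑ i ∈ range n, A.getD i 0 * (v i : ℝ) := step2
    _ = ∑ i ∈ range C.length, (min (C.getD i 0) (k - (C.take i).sum)) • A.getD i 0 := by
        rw [hC]
        apply Finset.sum_congr rfl
        intro i hi
        rw [nsmul_eq_mul, hv_def, mul_comm]
end

section
/- Let G_1 and G_2 be finite simple graphs, each on exactly n ≥ 1 vertices, such that C(k;G_1) ≤ C(k;G_2) for every integer k ≥ 0. Then for every real number x with x > λmax(G_2), the characteristic polynomials of the adjacency matrices satisfy P_{G_1}(x) ≥ P_{G_2}(x). -/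
/-- The number of closed walks of length `k` in `G` (closed walks are counted with
their starting vertex and direction). -/
noncomputable def closedWalkCount {V : Type*} [Fintype V] (G : SimpleGraph V) (k : ℕ) : ℕ :=
  ∑ v : V, Nat.card {p : G.Walk v v // p.length = k}

lemma adjMatrix_isHermitian {V : Type*} [Fintype V] [DecidableEq V] (G : SimpleGraph V)
    [DecidableRel G.Adj] : (G.adjMatrix ℝ).IsHermitian := by
  ext i j
  simp [Matrix.conjTranspose_apply, SimpleGraph.adj_comm]

/-- The largest eigenvalue of the (real, symmetric) adjacency matrix of `G`. -/
noncomputable def lamMax {V : Type*} [Fintype V] (G : SimpleGraph V) : ℝ := by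
  classical
  exact sSup (Set.range (adjMatrix_isHermitian G).eigenvalues)

/-- The characteristic polynomial `P_G(x) = det(xI - A(G))` of the adjacency matrix of `G`. -/
noncomputable def charPolyGraph {V : Type*} [Fintype V] (G : SimpleGraph V) : Polynomial ℝ := by
  classical
  exact (G.adjMatrix ℝ).charpoly

/-! ### Auxiliary matrix lemmas -/

open Matrix

section MatrixLemmas

variable {m : Type*} [Fintype m] [DecidableEq m] {A : Matrix m m ℝ}

lemma aux_star_mul_self (hA : A.IsHermitian) :
    star (hA.eigenvectorUnitary : Matrix m m ℝ) * hA.eigenvectorUnitary = 1 :=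
  Matrix.mem_unitaryGroup_iff'.mp (hA.eigenvectorUnitary).2

lemma aux_mul_star_self (hA : A.IsHermitian) :
    (hA.eigenvectorUnitary : Matrix m m ℝ) *
      star (hA.eigenvectorUnitary : Matrix m m ℝ) = 1 :=
  Matrix.mem_unitaryGroup_iff.mp (hA.eigenvectorUnitary).2

lemma aux_spec (hA : A.IsHermitian) :
    A = (hA.eigenvectorUnitary : Matrix m m ℝ) * diagonal hA.eigenvalues
      * star (hA.eigenvectorUnitary : Matrix m m ℝ) := by
  convert hA.spectral_theorem using 2
  simp [Unitary.conjStarAlgAut_apply, Function.comp_def]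

lemma aux_conj_pow {U B D : Matrix m m ℝ} (h1 : star U * U = 1)
    (h2 : U * star U = 1) (hB : B = U * D * star U) (k : ℕ) :
    B ^ k = U * D ^ k * star U := by
  induction k with
  | zero => simpa using h2.symm
  | succ l ih =>
    rw [pow_succ, ih, hB]
    have e : U * D ^ l * star U * (U * D * star U)
        = U * D ^ l * (star U * U) * (D * star U) := by noncomm_ring
    rw [e, h1, mul_one, pow_succ]
    noncomm_ring

lemma aux_eval_charpoly (M : Matrix m m ℝ) (x : ℝ) :
    (M.charpoly).eval x = (x • (1 : Matrix m m ℝ) - M).det := by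
  rw [Matrix.charpoly, ← Polynomial.coe_evalRingHom, RingHom.map_det]
  congr 1
  ext i j
  by_cases h : i = j <;>
    simp [h, Matrix.charmatrix_apply_eq, Matrix.charmatrix_apply_ne, Matrix.one_apply]

lemma aux_det_smul_one_sub (x : ℝ) (hA : A.IsHermitian) :
    (x • (1 : Matrix m m ℝ) - A).det = ∏ i, (x - hA.eigenvalues i) := by
  set U := (hA.eigenvectorUnitary : Matrix m m ℝ)
  have key : x • (1 : Matrix m m ℝ) - A
      = U * (diagonal (fun i => x - hA.eigenvalues i)) * star U := by
    have hd : diagonal (fun i => x - hA.eigenvalues i)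
        = x • (1 : Matrix m m ℝ) - diagonal hA.eigenvalues := by
      rw [Matrix.smul_one_eq_diagonal, diagonal_sub]
    rw [hd, Matrix.mul_sub, Matrix.sub_mul, Matrix.mul_smul, mul_one, Matrix.smul_mul,
      aux_mul_star_self hA, ← aux_spec hA]
  rw [key, det_mul, det_mul, mul_comm, ← mul_assoc, ← det_mul, aux_star_mul_self hA, det_one,
    one_mul, det_diagonal]

lemma aux_trace_pow (k : ℕ) (hA : A.IsHermitian) :
    (A ^ k).trace = ∑ i, hA.eigenvalues i ^ k := by
  have key := aux_conj_pow (aux_star_mul_self hA) (aux_mul_star_self hA) (aux_spec hA) k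
  rw [key, Matrix.trace_mul_cycle, aux_star_mul_self hA, one_mul, diagonal_pow, trace_diagonal]
  simp

lemma aux_rayleigh_le (hA : A.IsHermitian) (L : ℝ) (hL : ∀ i, hA.eigenvalues i ≤ L)
    (w : m → ℝ) : w ⬝ᵥ (A *ᵥ w) ≤ L * (w ⬝ᵥ w) := by
  set U := (hA.eigenvectorUnitary : Matrix m m ℝ) with hU
  have h2 : U * star U = 1 := aux_mul_star_self hA
  set c : m → ℝ := star U *ᵥ w with hc
  have hdot : ∀ z : m → ℝ, w ⬝ᵥ (U *ᵥ z) = c ⬝ᵥ z := by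
    intro z
    rw [dotProduct_mulVec, hc]
    congr 1
    rw [star_eq_conjTranspose, conjTranspose_eq_transpose_of_trivial,
      ← Matrix.vecMul_transpose, transpose_transpose]
  have e1 : w ⬝ᵥ (A *ᵥ w) = c ⬝ᵥ (diagonal hA.eigenvalues *ᵥ c) := by
    conv_lhs => rw [aux_spec hA]
    rw [← mulVec_mulVec, ← mulVec_mulVec, hdot]
  have e2 : w ⬝ᵥ w = c ⬝ᵥ c := by
    have hw : U *ᵥ c = w := by rw [hc, mulVec_mulVec, h2, one_mulVec]
    rw [← hdot c, hw]
  have e1' : w ⬝ᵥ (A *ᵥ w) = ∑ i, hA.eigenvalues i * (c i)^2 := by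
    rw [e1]; simp only [dotProduct, mulVec_diagonal]
    exact Finset.sum_congr rfl fun i _ => by ring
  have e2' : w ⬝ᵥ w = ∑ i, (c i)^2 := by rw [e2]; simp [dotProduct, sq]
  rw [e1', e2', Finset.mul_sum]
  exact Finset.sum_le_sum fun i _ => by nlinarith [sq_nonneg (c i), hL i]

lemma aux_eigvec_unit (hA : A.IsHermitian) (i : m) :
    (⇑(hA.eigenvectorBasis i) : m → ℝ) ⬝ᵥ ⇑(hA.eigenvectorBasis i) = 1 := by
  have h1 : ‖hA.eigenvectorBasis i‖ = 1 := hA.eigenvectorBasis.orthonormal.1 i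
  have hne := EuclideanSpace.norm_eq (hA.eigenvectorBasis i)
  rw [h1] at hne
  have h2 : ∑ j, ‖hA.eigenvectorBasis i j‖^2 = 1 := by
    have := congrArg (· ^ 2) hne.symm
    simpa [Real.sq_sqrt (Finset.sum_nonneg fun j _ => sq_nonneg _)] using this
  simpa [dotProduct, Real.norm_eq_abs, sq_abs, sq] using h2

lemma aux_abs_eigenvalue_le (hA : A.IsHermitian) (hnonneg : ∀ i j, 0 ≤ A i j)
    (L : ℝ) (hL : ∀ i, hA.eigenvalues i ≤ L) (i : m) :
    |hA.eigenvalues i| ≤ L := by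
  have rayleigh := aux_rayleigh_le hA L hL
  set v : m → ℝ := ⇑(hA.eigenvectorBasis i) with hv
  have hunit : v ⬝ᵥ v = 1 := aux_eigvec_unit hA i
  have heig : A *ᵥ v = hA.eigenvalues i • v := hA.mulVec_eigenvectorBasis i
  have hval : v ⬝ᵥ (A *ᵥ v) = hA.eigenvalues i := by
    rw [heig, dotProduct_smul, hunit, smul_eq_mul, mul_one]
  rw [abs_le]
  constructor
  · set w : m → ℝ := fun j => |v j| with hw
    have hww : w ⬝ᵥ w = 1 := by
      simpa [hw, dotProduct, abs_mul_abs_self] using hunit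
    have hineq : -(v ⬝ᵥ (A *ᵥ v)) ≤ w ⬝ᵥ (A *ᵥ w) := by
      simp only [dotProduct, mulVec, dotProduct, Finset.mul_sum, ← Finset.sum_neg_distrib]
      refine Finset.sum_le_sum fun j _ => Finset.sum_le_sum fun k _ => ?_
      have hjk := hnonneg j k
      have habs : |v j * (A j k * v k)| = w j * (A j k * w k) := by
        rw [abs_mul, abs_mul, abs_of_nonneg hjk]
      calc -(v j * (A j k * v k)) ≤ |v j * (A j k * v k)| := neg_le_abs _
        _ = w j * (A j k * w k) := habs
    have hfin := (hineq.trans (rayleigh w)).trans_eq (by rw [hww, mul_one])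
    linarith [hval ▸ hfin]
  · exact hL i

end MatrixLemmas

/-! ### The analytic comparison lemma -/

lemma aux_prod_le_prod_of_pow_sums {m : Type*} [Fintype m] (a b : m → ℝ) (x : ℝ) (hx : 0 < x)
    (ha : ∀ i, |a i| < x) (hb : ∀ i, |b i| < x)
    (hk : ∀ k : ℕ, ∑ i, a i ^ k ≤ ∑ i, b i ^ k) :
    ∏ i, (x - b i) ≤ ∏ i, (x - a i) := by
  have haq : ∀ i, |a i / x| < 1 := fun i => by
    rw [abs_div, abs_of_pos hx, div_lt_one hx]; exact ha i
  have hbq : ∀ i, |b i / x| < 1 := fun i => by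
    rw [abs_div, abs_of_pos hx, div_lt_one hx]; exact hb i
  have hapos : ∀ i, 0 < 1 - a i / x := fun i => by
    have := (abs_lt.mp (haq i)).2; linarith
  have hbpos : ∀ i, 0 < 1 - b i / x := fun i => by
    have := (abs_lt.mp (hbq i)).2; linarith
  have Sa : HasSum (fun k : ℕ => ∑ i, (a i / x) ^ (k + 1) / (k + 1))
      (∑ i, -Real.log (1 - a i / x)) :=
    hasSum_sum fun i _ => Real.hasSum_pow_div_log_of_abs_lt_one (haq i)
  have Sb : HasSum (fun k : ℕ => ∑ i, (b i / x) ^ (k + 1) / (k + 1))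
      (∑ i, -Real.log (1 - b i / x)) :=
    hasSum_sum fun i _ => Real.hasSum_pow_div_log_of_abs_lt_one (hbq i)
  have hterm : ∀ k : ℕ, ∑ i, (a i / x) ^ (k + 1) / (k + 1)
      ≤ ∑ i, (b i / x) ^ (k + 1) / (k + 1) := by
    intro k
    have h1 : ∀ c : m → ℝ, ∑ i, (c i / x) ^ (k + 1) / (k + 1)
        = (∑ i, c i ^ (k + 1)) / (x ^ (k + 1) * (k + 1)) := by
      intro c
      rw [Finset.sum_div]
      refine Finset.sum_congr rfl fun i _ => ?_
      rw [div_pow, div_div]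
    rw [h1, h1]
    have hden : 0 < x ^ (k + 1) * ((k : ℝ) + 1) := by positivity
    exact div_le_div_of_nonneg_right (hk (k + 1)) hden.le
  have hle : ∑ i, -Real.log (1 - a i / x) ≤ ∑ i, -Real.log (1 - b i / x) :=
    hasSum_le hterm Sa Sb
  have hlog : ∑ i, Real.log (x - b i) ≤ ∑ i, Real.log (x - a i) := by
    have hsplit : ∀ c : m → ℝ, (∀ i, 0 < 1 - c i / x) →
        ∑ i, Real.log (x - c i)
          = (Fintype.card m) * Real.log x + ∑ i, Real.log (1 - c i / x) := by
      intro c hc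
      have he : ∀ i : m, Real.log (x - c i) = Real.log x + Real.log (1 - c i / x) := by
        intro i
        rw [← Real.log_mul (ne_of_gt hx) (ne_of_gt (hc i))]
        congr 1
        field_simp
      simp only [he, Finset.sum_add_distrib, Finset.sum_const, Finset.card_univ,
        nsmul_eq_mul]
    rw [hsplit a hapos, hsplit b hbpos]
    have hgl : ∑ i, Real.log (1 - b i / x) ≤ ∑ i, Real.log (1 - a i / x) := by
      have := neg_le_neg hle
      simpa [Finset.sum_neg_distrib] using this
    linarith
  have hexp : ∀ c : m → ℝ, (∀ i, 0 < x - c i) →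
      ∏ i, (x - c i) = Real.exp (∑ i, Real.log (x - c i)) := by
    intro c hc
    rw [Real.exp_sum]
    exact Finset.prod_congr rfl fun i _ => (Real.exp_log (hc i)).symm
  have hxa : ∀ i, 0 < x - a i := fun i => by have := (abs_lt.mp (ha i)).2; linarith
  have hxb : ∀ i, 0 < x - b i := fun i => by have := (abs_lt.mp (hb i)).2; linarith
  rw [hexp a hxa, hexp b hxb]
  exact Real.exp_le_exp.mpr hlog

/-! ### Graph-level lemmas -/

/-- The eigenvalues of the adjacency matrix of `G` (with classical instances, matching
the definitions of `lamMax` and `charPolyGraph`). -/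
noncomputable def eigG {V : Type*} [Fintype V] (G : SimpleGraph V) : V → ℝ := by
  classical
  exact (adjMatrix_isHermitian G).eigenvalues

lemma lamMax_eq {V : Type*} [Fintype V] (G : SimpleGraph V) :
    lamMax G = sSup (Set.range (eigG G)) := rfl

lemma eval_charPolyGraph {V : Type*} [Fintype V] (G : SimpleGraph V) (x : ℝ) :
    (charPolyGraph G).eval x = ∏ i, (x - eigG G i) := by
  classical
  unfold charPolyGraph eigG
  rw [aux_eval_charpoly, aux_det_smul_one_sub]

lemma sum_eig_pow {V : Type*} [Fintype V] (G : SimpleGraph V) (k : ℕ) :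
    ∑ i, eigG G i ^ k = (closedWalkCount G k : ℝ) := by
  classical
  unfold eigG closedWalkCount
  rw [← aux_trace_pow k (adjMatrix_isHermitian G)]
  rw [Matrix.trace]
  push_cast
  refine Finset.sum_congr rfl fun v _ => ?_
  rw [Matrix.diag_apply, SimpleGraph.adjMatrix_pow_apply_eq_card_walk]
  norm_cast
  rw [Nat.card_eq_fintype_card]
  rfl

lemma eig_le_lamMax {V : Type*} [Fintype V] (G : SimpleGraph V) (i : V) :
    eigG G i ≤ lamMax G := by
  rw [lamMax_eq]
  exact le_csSup ((Set.finite_range _).bddAbove) (Set.mem_range_self i)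

lemma exists_eig_lamMax {V : Type*} [Fintype V] [Nonempty V] (G : SimpleGraph V) :
    ∃ i, lamMax G = eigG G i := by
  rw [lamMax_eq]
  have h := (Set.range_nonempty (eigG G)).csSup_mem (Set.finite_range _)
  obtain ⟨i, hi⟩ := h
  exact ⟨i, hi.symm⟩

lemma abs_eig_le_lamMax {V : Type*} [Fintype V] (G : SimpleGraph V) (i : V) :
    |eigG G i| ≤ lamMax G := by
  classical
  unfold eigG
  refine aux_abs_eigenvalue_le _ ?_ _ (fun j => eig_le_lamMax G j) i
  intro a b
  by_cases h : G.Adj a b <;> simp [h]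

lemma lamMax_nonneg {V : Type*} [Fintype V] [Nonempty V] (G : SimpleGraph V) :
    0 ≤ lamMax G := by
  have h1 : (0 : ℝ) ≤ (closedWalkCount G 1 : ℝ) := Nat.cast_nonneg _
  rw [← sum_eig_pow G 1] at h1
  have h2 : ∑ i, eigG G i ^ 1 ≤ ∑ _i : V, lamMax G :=
    Finset.sum_le_sum fun i _ => by rw [pow_one]; exact eig_le_lamMax G i
  rw [Finset.sum_const, Finset.card_univ, nsmul_eq_mul] at h2
  have hcard : (0 : ℝ) < Fintype.card V := by
    have := Fintype.card_pos (α := V)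
    exact_mod_cast this
  nlinarith

lemma lamMax_mono {n : ℕ} (hn : 1 ≤ n) (G₁ G₂ : SimpleGraph (Fin n))
    (h : ∀ k : ℕ, closedWalkCount G₁ k ≤ closedWalkCount G₂ k) :
    lamMax G₁ ≤ lamMax G₂ := by
  have : Nonempty (Fin n) := Fin.pos_iff_nonempty.mp hn
  by_contra hlt
  push_neg at hlt
  have h2nn : 0 ≤ lamMax G₂ := lamMax_nonneg G₂
  have h1nn : 0 ≤ lamMax G₁ := lamMax_nonneg G₁
  -- For every k, (lamMax G₁)^(2k) ≤ n * (lamMax G₂)^(2k)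
  have key : ∀ k : ℕ, (lamMax G₁) ^ (2 * k) ≤ (n : ℝ) * (lamMax G₂) ^ (2 * k) := by
    intro k
    obtain ⟨i₀, hi₀⟩ := exists_eig_lamMax G₁
    have step1 : (lamMax G₁) ^ (2 * k) ≤ ∑ i, eigG G₁ i ^ (2 * k) := by
      rw [hi₀]
      have : ∀ i, (0:ℝ) ≤ eigG G₁ i ^ (2 * k) := fun i => by
        rw [mul_comm, pow_mul]; positivity
      calc eigG G₁ i₀ ^ (2 * k) = ∑ i ∈ {i₀}, eigG G₁ i ^ (2 * k) := by simp
        _ ≤ ∑ i, eigG G₁ i ^ (2 * k) :=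
          Finset.sum_le_sum_of_subset_of_nonneg (Finset.subset_univ _)
            (fun i _ _ => this i)
    have step2 : ∑ i, eigG G₁ i ^ (2 * k) ≤ ∑ i, eigG G₂ i ^ (2 * k) := by
      rw [sum_eig_pow, sum_eig_pow]
      exact_mod_cast h (2 * k)
    have step3 : ∑ i, eigG G₂ i ^ (2 * k) ≤ (n : ℝ) * (lamMax G₂) ^ (2 * k) := by
      have hb : ∀ i, eigG G₂ i ^ (2 * k) ≤ (lamMax G₂) ^ (2 * k) := by
        intro i
        rw [pow_mul, pow_mul]
        have habs := abs_eig_le_lamMax G₂ i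
        have h2 : eigG G₂ i ^ 2 ≤ (lamMax G₂) ^ 2 := by
          rw [← sq_abs]
          exact pow_le_pow_left₀ (abs_nonneg _) habs 2
        exact pow_le_pow_left₀ (sq_nonneg _) h2 k
      calc ∑ i, eigG G₂ i ^ (2 * k) ≤ ∑ _i : Fin n, (lamMax G₂) ^ (2 * k) :=
          Finset.sum_le_sum fun i _ => hb i
        _ = (n : ℝ) * (lamMax G₂) ^ (2 * k) := by
          rw [Finset.sum_const, Finset.card_univ, Fintype.card_fin, nsmul_eq_mul]
    linarith
  -- derive contradiction
  rcases eq_or_lt_of_le h2nn with hz | hpos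
  · -- lamMax G₂ = 0
    have hk1 := key 1
    rw [← hz] at hk1
    norm_num at hk1
    have hpos1 : (0:ℝ) < lamMax G₁ := by rw [← hz] at hlt; exact hlt
    nlinarith
  · have hrat : 1 < lamMax G₁ / lamMax G₂ := (one_lt_div hpos).mpr hlt
    obtain ⟨k, hk⟩ := pow_unbounded_of_one_lt (n : ℝ) hrat
    have hk2 : (n : ℝ) < (lamMax G₁ / lamMax G₂) ^ (2 * k) := by
      refine hk.trans_le ?_
      exact pow_le_pow_right₀ hrat.le (by omega)
    have := key k
    rw [div_pow] at hk2
    rw [lt_div_iff₀ (by positivity)] at hk2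
    linarith
  
theorem stmt8 (n : ℕ) (hn : 1 ≤ n) (G₁ G₂ : SimpleGraph (Fin n))
    (h : ∀ k : ℕ, closedWalkCount G₁ k ≤ closedWalkCount G₂ k) :
    ∀ x : ℝ, lamMax G₂ < x →
      Polynomial.eval x (charPolyGraph G₂) ≤ Polynomial.eval x (charPolyGraph G₁) := by
  intro x hx
  have : Nonempty (Fin n) := Fin.pos_iff_nonempty.mp hn
  have h2nn : 0 ≤ lamMax G₂ := lamMax_nonneg G₂
  have hxpos : 0 < x := lt_of_le_of_lt h2nn hx
  have hmono : lamMax G₁ ≤ lamMax G₂ := lamMax_mono hn G₁ G₂ h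
  have ha : ∀ i, |eigG G₁ i| < x := fun i =>
    lt_of_le_of_lt ((abs_eig_le_lamMax G₁ i).trans hmono) hx
  have hb : ∀ i, |eigG G₂ i| < x := fun i =>
    lt_of_le_of_lt (abs_eig_le_lamMax G₂ i) hx
  have hk : ∀ k : ℕ, ∑ i, eigG G₁ i ^ k ≤ ∑ i, eigG G₂ i ^ k := by
    intro k
    rw [sum_eig_pow, sum_eig_pow]
    exact_mod_cast h k
  rw [eval_charPolyGraph, eval_charPolyGraph]
  exact aux_prod_le_prod_of_pow_sums (eigG G₁) (eigG G₂) x hxpos ha hb hk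
end
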